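/- Let U₁, U₂, U₃ be subspaces of F_q^d and V₁', V₂', V₃' subspaces with V_k' ⊆ U_k. Suppose there exist decoders as in the LCBC problem with K = 3 (User k has Xᵀ-projections onto V_k' and must recover projections onto U_k from the broadcast S and its side information), and the data X ∈ F_q^{d×L} is i.i.d. uniform. Then H(S)/L ≥ rk(U₁) − rk(V₁') + rk([U₁,U₂]) − rk([U₁,V₂']) + rk([U₁,U₂,U₃]) − rk([U₁,U₂,V₃']), where ranks are dimensions of subspace sums and H is in q-ary units. -/

import Mathlib

/-!
Instead of the chain rule we bound every fibre of `Φ`. Fix a broadcast value `σ`. User 1's side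
information `XᵀV₁'` takes at most `q ^ (L rk V₁')` values. Once it is fixed, `σ` determines
`XᵀU₁`, so `XᵀV₂'` ranges over a translate of the image of `{X | XᵀU₁ = 0}`, a space of dimension
`L (rk [U₁, V₂'] - rk U₁)`; user 3 is handled in the same way. Finally, once `XᵀU₁, XᵀU₂, XᵀU₃`
are all fixed, `X` lies in a translate of a space of dimension `L (d - rk [U₁, U₂, U₃])`. With `Δ`
the rank expression of the bound, every fibre thus has at most `q ^ (L (d - Δ))` points, and the
entropy of `Φ` under the uniform distribution on `q ^ (L d)` points is at least `L Δ log q`.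
-/

open scoped BigOperators
open Matrix

/-- Probability that the random variable `X` takes the value `a`. -/
noncomputable def pOf {Ω α : Type*} [Fintype Ω] [DecidableEq α]
    (p : Ω → ℝ) (X : Ω → α) (a : α) : ℝ :=
  ∑ ω ∈ Finset.univ.filter (fun ω => X ω = a), p ω

/-- Shannon entropy (natural units) of a finitely-valued random variable. -/
noncomputable def Hent {Ω α : Type*} [Fintype Ω] [Fintype α] [DecidableEq α]
    (p : Ω → ℝ) (X : Ω → α) : ℝ :=
  ∑ a : α, Real.negMulLog (pOf p X a)

open Finset Module LinearMap Submodule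

theorem sum_pOf {Ω α : Type*} [Fintype Ω] [Fintype α] [DecidableEq α] (p : Ω → ℝ) (X : Ω → α) :
    ∑ a, pOf p X a = ∑ ω, p ω :=
  sum_fiberwise univ X p

theorem Real.neg_mul_log_le_negMulLog {p c : ℝ} (hp : 0 ≤ p) (hpc : p ≤ c) :
    -(p * Real.log c) ≤ Real.negMulLog p := by
  rcases hp.eq_or_lt with rfl | hp
  · simp
  rw [Real.negMulLog, neg_mul, neg_le_neg_iff]
  exact mul_le_mul_of_nonneg_left (Real.log_le_log hp hpc) hp.le

theorem log_card_div_le_Hent_uniform {Ω α : Type*} [Fintype Ω] [Nonempty Ω] [Fintype α]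
    [DecidableEq α] (X : Ω → α) {M : ℝ} (hX : ∀ a, (#{ω | X ω = a} : ℝ) ≤ M) :
    Real.log (Fintype.card Ω / M) ≤ Hent (fun _ => (Fintype.card Ω : ℝ)⁻¹) X := by
  set N : ℝ := (Fintype.card Ω : ℝ)
  have hN : N ≠ 0 := Nat.cast_ne_zero.mpr Fintype.card_ne_zero
  have hp : ∀ a, pOf (fun _ => N⁻¹) X a = #{ω | X ω = a} / N := fun a => by
    rw [pOf, sum_const, nsmul_eq_mul, div_eq_mul_inv]
  calc Real.log (N / M)
      = -((∑ a, pOf (fun _ => N⁻¹) X a) * Real.log (M / N)) := by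
        rw [sum_pOf, sum_const, card_univ, nsmul_eq_mul, mul_inv_cancel₀ hN, one_mul,
          ← Real.log_inv, inv_div]
    _ = ∑ a, -(pOf (fun _ => N⁻¹) X a * Real.log (M / N)) := by
        rw [sum_mul, ← sum_neg_distrib]
    _ ≤ Hent (fun _ => N⁻¹) X := sum_le_sum fun a _ =>
        Real.neg_mul_log_le_negMulLog (by rw [hp]; positivity)
          (by rw [hp]; gcongr; exact hX a)

section Counting

variable {F E B : Type*} [Field F] [AddCommGroup E] [Module F E] [AddCommGroup B] [Module F B]

theorem Submodule.finrank_map_add_finrank_inf_ker (p : Submodule F E) (g : E →ₗ[F] B)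
    [FiniteDimensional F p] :
    finrank F (p.map g) + finrank F ↥(p ⊓ ker g) = finrank F p := by
  have := (g.domRestrict p).finrank_range_add_finrank_ker
  rwa [range_domRestrict, ker_domRestrict, ← finrank_map_subtype_eq, map_comap_subtype] at this

variable [Fintype F] [Finite E] [DecidableEq B]

theorem card_image_le_pow_finrank_map {p : Submodule F E} (g : E →ₗ[F] B) {t : Finset E}
    (ht : ∀ x ∈ t, ∀ y ∈ t, x - y ∈ p) :
    #(t.image g) ≤ Fintype.card F ^ finrank F (p.map g) := by
  rcases t.eq_empty_or_nonempty with rfl | ⟨x₀, hx₀⟩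
  · simp
  rw [← Nat.card_eq_fintype_card, ← natCard_eq_pow_finrank, ← Set.ncard_coe_finset]
  have hfin : (p.map g : Set B).Finite :=
    ((Set.toFinite (p : Set E)).image g).subset (map_coe g p).subset
  refine (Set.ncard_le_ncard_of_injOn (· - g x₀) ?_ sub_left_injective.injOn hfin).trans_eq
    (Nat.card_coe_set_eq _).symm
  rintro _ hy
  obtain ⟨x, hx, rfl⟩ := Finset.mem_image.mp hy
  exact ⟨x - x₀, ht x hx x₀ hx₀, map_sub g x x₀⟩

theorem card_le_pow_finrank {p : Submodule F E} {t : Finset E}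
    (ht : ∀ x ∈ t, ∀ y ∈ t, x - y ∈ p) :
    #t ≤ Fintype.card F ^ finrank F p := by
  classical
  have := card_image_le_pow_finrank_map LinearMap.id ht
  rwa [Submodule.map_id, LinearMap.id_coe, Finset.image_id] at this

theorem card_le_pow_finrank_map_mul {p : Submodule F E} (g : E →ₗ[F] B) {t : Finset E}
    (ht : ∀ x ∈ t, ∀ y ∈ t, x - y ∈ p) {K : ℕ} (hK : ∀ b, #{x ∈ t | g x = b} ≤ K) :
    #t ≤ Fintype.card F ^ finrank F (p.map g) * K :=
  (card_le_mul_card_image t K fun b _ => hK b).trans_eq (mul_comm _ _) |>.trans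
    (Nat.mul_le_mul_right K (card_image_le_pow_finrank_map g ht))

end Counting

section Scheme

variable {F E S B₁ B₂ B₃ C₁ C₂ C₃ : Type*} [Field F] [Fintype F] [AddCommGroup E] [Module F E]
  [Fintype E] [DecidableEq S]
  [AddCommGroup B₁] [Module F B₁] [DecidableEq B₁] [AddCommGroup B₂] [Module F B₂] [DecidableEq B₂]
  [AddCommGroup B₃] [Module F B₃] [DecidableEq B₃]
  [AddCommGroup C₁] [Module F C₁] [AddCommGroup C₂] [Module F C₂] [AddCommGroup C₃] [Module F C₃]

theorem card_fiber_le_of_decoders (Φ : E → S) (g₁ : E →ₗ[F] B₁) (g₂ : E →ₗ[F] B₂)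
    (g₃ : E →ₗ[F] B₃) (h₁ : E →ₗ[F] C₁) (h₂ : E →ₗ[F] C₂) (h₃ : E →ₗ[F] C₃)
    (Ψ₁ : S → B₁ → C₁) (Ψ₂ : S → B₂ → C₂) (Ψ₃ : S → B₃ → C₃)
    (hΨ₁ : ∀ x, Ψ₁ (Φ x) (g₁ x) = h₁ x) (hΨ₂ : ∀ x, Ψ₂ (Φ x) (g₂ x) = h₂ x)
    (hΨ₃ : ∀ x, Ψ₃ (Φ x) (g₃ x) = h₃ x) (σ : S) :
    #{x | Φ x = σ} ≤ Fintype.card F ^ (finrank F (range g₁) + (finrank F ((ker h₁).map g₂)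
      + (finrank F ((ker h₁ ⊓ ker h₂).map g₃) + finrank F ↥(ker h₁ ⊓ ker h₂ ⊓ ker h₃)))) := by
  rw [range_eq_map, pow_add, pow_add, pow_add]
  refine card_le_pow_finrank_map_mul g₁ (fun _ _ _ _ => mem_top) fun b₁ => ?_
  refine card_le_pow_finrank_map_mul g₂ ?_ fun b₂ => ?_
  · simp only [mem_filter, mem_univ, true_and, mem_ker, map_sub, sub_eq_zero]
    rintro x ⟨rfl, hx⟩ y ⟨hy, rfl⟩
    rw [← hΨ₁, ← hΨ₁, hx, hy]
  refine card_le_pow_finrank_map_mul g₃ ?_ fun b₃ => card_le_pow_finrank ?_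
  · simp only [mem_filter, mem_univ, true_and, Submodule.mem_inf, mem_ker, map_sub, sub_eq_zero]
    rintro x ⟨⟨rfl, hx₁⟩, hx₂⟩ y ⟨⟨hy, rfl⟩, rfl⟩
    rw [← hΨ₁, ← hΨ₁, ← hΨ₂, ← hΨ₂, hx₁, hx₂, hy]
    exact ⟨rfl, rfl⟩
  · simp only [mem_filter, mem_univ, true_and, Submodule.mem_inf, mem_ker, map_sub, sub_eq_zero]
    rintro x ⟨⟨⟨rfl, hx₁⟩, hx₂⟩, hx₃⟩ y ⟨⟨⟨hy, rfl⟩, rfl⟩, rfl⟩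
    rw [← hΨ₁, ← hΨ₁, ← hΨ₂, ← hΨ₂, ← hΨ₃, ← hΨ₃, hx₁, hx₂, hx₃, hy]
    exact ⟨⟨rfl, rfl⟩, rfl⟩

end Scheme

namespace Matrix

variable {R m n n' : Type*} (l : Type*) [CommRing R] [Fintype m]

def transposeMulLinearMap (M : Matrix m n R) : Matrix m l R →ₗ[R] Matrix l n R :=
  mulRightLinearMap l R M ∘ₗ (transposeLinearEquiv m l R R).toLinearMap

@[simp]
theorem transposeMulLinearMap_apply (M : Matrix m n R) (X : Matrix m l R) :
    transposeMulLinearMap l M X = Xᵀ * M :=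
  rfl

theorem mem_ker_transposeMulLinearMap (M : Matrix m n R) (X : Matrix m l R) :
    X ∈ ker (transposeMulLinearMap l M) ↔ ∀ i, (fun k => X k i) ∈ ker M.vecMulLinear := by
  simp only [mem_ker]
  exact funext_iff

theorem ker_transposeMulLinearMap_fromCols (A : Matrix m n R) (B : Matrix m n' R) :
    ker (transposeMulLinearMap l (fromCols A B))
      = ker (transposeMulLinearMap l A) ⊓ ker (transposeMulLinearMap l B) := by
  ext X
  simp [mul_fromCols, ← fromCols_zero, fromCols_ext_iff]

theorem finrank_ker_transposeMulLinearMap {K : Type*} [Field K] [Fintype l] (M : Matrix m n K) :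
    finrank K (ker (transposeMulLinearMap l M)) = Fintype.card l * finrank K (ker M.vecMulLinear) :=
  (LinearEquiv.finrank_eq (
    { toFun X i := ⟨fun k => X.1 k i, (mem_ker_transposeMulLinearMap l M X).mp X.2 i⟩
      invFun Y := ⟨of fun k i => (Y i).1 k,
        (mem_ker_transposeMulLinearMap l M _).mpr fun i => (Y i).2⟩
      map_add' _ _ := rfl
      map_smul' _ _ := rfl
      left_inv _ := rfl
      right_inv _ := rfl } : ker (transposeMulLinearMap l M) ≃ₗ[K] (l → ker M.vecMulLinear))).trans
    (by rw [finrank_pi_fintype, sum_const, card_univ, smul_eq_mul])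

theorem finrank_ker_transposeMulLinearMap_add {K : Type*} [Field K] [Fintype l] [Fintype n]
    (M : Matrix m n K) :
    finrank K (ker (transposeMulLinearMap l M)) + Fintype.card l * M.rank
      = Fintype.card m * Fintype.card l := by
  have := M.vecMulLinear.finrank_range_add_finrank_ker
  rw [finrank_fintype_fun_eq_card] at this
  rw [finrank_ker_transposeMulLinearMap, ← rank_transpose, rank, mulVecLin_transpose, ← this]
  ring

end Matrix

theorem lcbc_fiber_exponent_eq {F : Type*} [Field F] {d L m₁' m₂' m₃' n₁ n₂ n₃ : ℕ}
    (V₁' : Matrix (Fin d) (Fin m₁') F)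
    (V₂' : Matrix (Fin d) (Fin m₂') F) (V₃' : Matrix (Fin d) (Fin m₃') F)
    (U₁ : Matrix (Fin d) (Fin n₁) F) (U₂ : Matrix (Fin d) (Fin n₂) F)
    (U₃ : Matrix (Fin d) (Fin n₃) F) :
    ((finrank F (range (transposeMulLinearMap (Fin L) V₁'))
      + (finrank F ((ker (transposeMulLinearMap (Fin L) U₁)).map
          (transposeMulLinearMap (Fin L) V₂'))
      + (finrank F ((ker (transposeMulLinearMap (Fin L) (fromCols U₁ U₂))).map
          (transposeMulLinearMap (Fin L) V₃'))
      + finrank F (ker (transposeMulLinearMap (Fin L) (fromCols (fromCols U₁ U₂) U₃))))) : ℕ) : ℝ)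
      = d * L - L * (((U₁.rank : ℝ) - V₁'.rank)
        + ((fromCols U₁ U₂).rank - (fromCols U₁ V₂').rank)
        + ((fromCols (fromCols U₁ U₂) U₃).rank - (fromCols (fromCols U₁ U₂) V₃').rank)) := by
  have r₁ := (transposeMulLinearMap (Fin L) V₁').finrank_range_add_finrank_ker
  have r₂ := (ker (transposeMulLinearMap (Fin L) U₁)).finrank_map_add_finrank_inf_ker
    (transposeMulLinearMap (Fin L) V₂')
  have r₃ := (ker (transposeMulLinearMap (Fin L) (fromCols U₁ U₂))).finrank_map_add_finrank_inf_ker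
      (transposeMulLinearMap (Fin L) V₃')
  rw [← ker_transposeMulLinearMap_fromCols] at r₂ r₃
  have k₁ := finrank_ker_transposeMulLinearMap_add (Fin L) V₁'
  have k₂ := finrank_ker_transposeMulLinearMap_add (Fin L) U₁
  have k₃ := finrank_ker_transposeMulLinearMap_add (Fin L) (fromCols U₁ V₂')
  have k₄ := finrank_ker_transposeMulLinearMap_add (Fin L) (fromCols U₁ U₂)
  have k₅ := finrank_ker_transposeMulLinearMap_add (Fin L) (fromCols (fromCols U₁ U₂) V₃')
  have k₆ := finrank_ker_transposeMulLinearMap_add (Fin L) (fromCols (fromCols U₁ U₂) U₃)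
  simp only [finrank_matrix, finrank_self, Fintype.card_fin, mul_one] at r₁ k₁ k₂ k₃ k₄ k₅ k₆
  rify at r₁ r₂ r₃ k₁ k₂ k₃ k₄ k₅ k₆
  push_cast
  linear_combination r₁ + r₂ + r₃ - k₁ + k₂ - k₃ + k₄ - k₅ + k₆

theorem lcbc_converse_delta_one_general
    {F : Type*} [Field F] [Fintype F]
    {d L m₁' m₂' m₃' n₁ n₂ n₃ : ℕ} (hL : 0 < L)
    (V₁' : Matrix (Fin d) (Fin m₁') F)
    (V₂' : Matrix (Fin d) (Fin m₂') F)
    (V₃' : Matrix (Fin d) (Fin m₃') F)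
    (U₁ : Matrix (Fin d) (Fin n₁) F)
    (U₂ : Matrix (Fin d) (Fin n₂) F)
    (U₃ : Matrix (Fin d) (Fin n₃) F)
    (𝒮 : Type*) [Fintype 𝒮] [DecidableEq 𝒮]
    (Φ : Matrix (Fin d) (Fin L) F → 𝒮)
    (Ψ₁ : 𝒮 → Matrix (Fin L) (Fin m₁') F → Matrix (Fin L) (Fin n₁) F)
    (Ψ₂ : 𝒮 → Matrix (Fin L) (Fin m₂') F → Matrix (Fin L) (Fin n₂) F)
    (Ψ₃ : 𝒮 → Matrix (Fin L) (Fin m₃') F → Matrix (Fin L) (Fin n₃) F)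
    (hdec₁ : ∀ X : Matrix (Fin d) (Fin L) F, Ψ₁ (Φ X) (Xᵀ * V₁') = Xᵀ * U₁)
    (hdec₂ : ∀ X : Matrix (Fin d) (Fin L) F, Ψ₂ (Φ X) (Xᵀ * V₂') = Xᵀ * U₂)
    (hdec₃ : ∀ X : Matrix (Fin d) (Fin L) F, Ψ₃ (Φ X) (Xᵀ * V₃') = Xᵀ * U₃) :
    ((U₁.rank : ℝ) - (V₁'.rank : ℝ))
      + (((Matrix.fromCols U₁ U₂).rank : ℝ)
          - ((Matrix.fromCols U₁ V₂').rank : ℝ))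
      + (((Matrix.fromCols (Matrix.fromCols U₁ U₂) U₃).rank : ℝ)
          - ((Matrix.fromCols (Matrix.fromCols U₁ U₂) V₃').rank : ℝ))
    ≤ Hent (fun _ : Matrix (Fin d) (Fin L) F =>
          ((Fintype.card (Matrix (Fin d) (Fin L) F) : ℝ))⁻¹) Φ
        / Real.log (Fintype.card F) / (L : ℝ) := by
  classical
  have hfib := card_fiber_le_of_decoders Φ (transposeMulLinearMap (Fin L) V₁')
    (transposeMulLinearMap (Fin L) V₂') (transposeMulLinearMap (Fin L) V₃')
    (transposeMulLinearMap (Fin L) U₁) (transposeMulLinearMap (Fin L) U₂)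
    (transposeMulLinearMap (Fin L) U₃) Ψ₁ Ψ₂ Ψ₃ hdec₁ hdec₂ hdec₃
  rw [← ker_transposeMulLinearMap_fromCols, ← ker_transposeMulLinearMap_fromCols] at hfib
  have hH := log_card_div_le_Hent_uniform Φ fun σ => Nat.cast_le (α := ℝ) |>.mpr (hfib σ)
  have hq : 0 < Real.log (Fintype.card F) := Real.log_pos (by exact_mod_cast Fintype.one_lt_card)
  rw [div_div, le_div_iff₀ (mul_pos hq (by exact_mod_cast hL))]
  refine le_of_eq_of_le ?_ hH
  rw [card_eq_pow_finrank (K := F) (V := Matrix (Fin d) (Fin L) F), Nat.cast_pow, Nat.cast_pow,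
    Real.log_div (by positivity) (by positivity), Real.log_pow, Real.log_pow,
    lcbc_fiber_exponent_eq]
  simp only [finrank_matrix, finrank_self, Fintype.card_fin, mul_one]
  push_cast
  ring

/-- Entropic converse bound `Δ* ≥ Δ₁^{123}` for the 3-user LCBC.
Data `X ∈ F_q^{d×L}` is uniform (i.i.d. uniform entries); User `k` has side
information `XᵀV_k'` and must recover `XᵀU_k` (its whole signal space, with
`V_k' ⊆ U_k` at the level of column spans) from the broadcast `S = Φ(X)` and its
side information. Then `H(S)/L ≥ (rk U₁ − rk V₁') + (rk[U₁,U₂] − rk[U₁,V₂'])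
+ (rk[U₁,U₂,U₃] − rk[U₁,U₂,V₃'])` in q-ary units. -/
theorem lcbc_converse_delta_one
    {F : Type*} [Field F] [Fintype F] [DecidableEq F]
    {d L m₁' m₂' m₃' n₁ n₂ n₃ : ℕ} (hL : 0 < L)
    (V₁' : Matrix (Fin d) (Fin m₁') F)
    (V₂' : Matrix (Fin d) (Fin m₂') F)
    (V₃' : Matrix (Fin d) (Fin m₃') F)
    (U₁ : Matrix (Fin d) (Fin n₁) F)
    (U₂ : Matrix (Fin d) (Fin n₂) F)
    (U₃ : Matrix (Fin d) (Fin n₃) F)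
    (hsub₁ : LinearMap.range V₁'.mulVecLin ≤ LinearMap.range U₁.mulVecLin)
    (hsub₂ : LinearMap.range V₂'.mulVecLin ≤ LinearMap.range U₂.mulVecLin)
    (hsub₃ : LinearMap.range V₃'.mulVecLin ≤ LinearMap.range U₃.mulVecLin)
    (𝒮 : Type*) [Fintype 𝒮] [DecidableEq 𝒮]
    (Φ : Matrix (Fin d) (Fin L) F → 𝒮)
    (Ψ₁ : 𝒮 → Matrix (Fin L) (Fin m₁') F → Matrix (Fin L) (Fin n₁) F)
    (Ψ₂ : 𝒮 → Matrix (Fin L) (Fin m₂') F → Matrix (Fin L) (Fin n₂) F)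
    (Ψ₃ : 𝒮 → Matrix (Fin L) (Fin m₃') F → Matrix (Fin L) (Fin n₃) F)
    (hdec₁ : ∀ X : Matrix (Fin d) (Fin L) F, Ψ₁ (Φ X) (Xᵀ * V₁') = Xᵀ * U₁)
    (hdec₂ : ∀ X : Matrix (Fin d) (Fin L) F, Ψ₂ (Φ X) (Xᵀ * V₂') = Xᵀ * U₂)
    (hdec₃ : ∀ X : Matrix (Fin d) (Fin L) F, Ψ₃ (Φ X) (Xᵀ * V₃') = Xᵀ * U₃) :
    ((U₁.rank : ℝ) - (V₁'.rank : ℝ))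
      + (((Matrix.fromCols U₁ U₂).rank : ℝ)
          - ((Matrix.fromCols U₁ V₂').rank : ℝ))
      + (((Matrix.fromCols (Matrix.fromCols U₁ U₂) U₃).rank : ℝ)
          - ((Matrix.fromCols (Matrix.fromCols U₁ U₂) V₃').rank : ℝ))
    ≤ Hent (fun _ : Matrix (Fin d) (Fin L) F =>
          ((Fintype.card (Matrix (Fin d) (Fin L) F) : ℝ))⁻¹) Φ
        / Real.log (Fintype.card F) / (L : ℝ) :=
  lcbc_converse_delta_one_general hL V₁' V₂' V₃' U₁ U₂ U₃ 𝒮 Φ Ψ₁ Ψ₂ Ψ₃ hdec₁ hdec₂ hdec₃
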